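/- arXiv:2605.22867 — 3 statements merged into one kernel-verified Lean document; each statement's English description precedes it below -/
import Mathlib

section
/- If Γ is an ω-clique regular graph (every edge lies in exactly one clique of order ω), then ω = 2 or ω equals the clique number of Γ. -/
open SimpleGraph

/-- A graph is `ω`-clique regular if its edge set is nonempty and every edge lies in a
unique clique of order `ω`. -/
def IsCliqueRegular {V : Type*} (G : SimpleGraph V) (ω : ℕ) : Prop :=
  G.edgeSet.Nonempty ∧
    ∀ ⦃x y : V⦄, G.Adj x y → ∃! s : Finset V, G.IsNClique ω s ∧ x ∈ s ∧ y ∈ s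

/-- If `Γ` is an `ω`-clique regular graph, then `ω = 2` or `ω` equals the clique number. -/
theorem stmt0 {V : Type*} [Fintype V] (G : SimpleGraph V) (ω : ℕ)
    (h : IsCliqueRegular G ω) : ω = 2 ∨ ω = G.cliqueNum := by
  classical
  obtain ⟨⟨e, he⟩, huniq⟩ := h
  induction e using Sym2.ind with | _ x y =>
  rw [mem_edgeSet] at he
  obtain ⟨s, ⟨hs, hxs, hys⟩, hsu⟩ := huniq he
  -- ω ≥ 2
  have hω2 : 2 ≤ ω := by
    rw [← hs.card_eq]
    have : ({x, y} : Finset V) ⊆ s := by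
      intro z hz; simp at hz; rcases hz with rfl | rfl <;> assumption
    calc 2 = ({x, y} : Finset V).card := by
            rw [Finset.card_insert_of_notMem (by simp [he.ne]), Finset.card_singleton]
      _ ≤ s.card := Finset.card_le_card this
  by_cases hω : ω = 2
  · exact Or.inl hω
  right
  have hω3 : 3 ≤ ω := lt_of_le_of_ne hω2 (Ne.symm hω)
  -- every clique has card ≤ ω
  have hbound : ∀ t : Finset V, G.IsClique t → t.card ≤ ω := by
    intro t ht
    by_contra hlt
    push_neg at hlt
    obtain ⟨u, hut, hucard⟩ := Finset.exists_subset_card_eq (n := ω + 1) hlt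
    have hu : G.IsClique u := ht.subset hut
    -- pick two distinct vertices in u
    obtain ⟨p, hp⟩ : u.Nonempty := Finset.card_pos.mp (by omega)
    obtain ⟨q, hq, hpq⟩ : ∃ q ∈ u, q ≠ p := by
      have : 1 < u.card := by omega
      obtain ⟨q, hq, hqp⟩ := Finset.exists_mem_ne this p
      exact ⟨q, hq, hqp⟩
    have hadj : G.Adj p q := hu hp hq hpq.symm
    -- the set u \ {p, q} has at least two elements
    have hcard2 : 2 ≤ (u \ {p, q}).card := by
      have hsub : ({p, q} : Finset V) ⊆ u := by
        intro z hz; simp at hz; rcases hz with rfl | rfl <;> assumption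
      have h2 : ({p, q} : Finset V).card = 2 := by
        rw [Finset.card_insert_of_notMem (by simp [hpq.symm]), Finset.card_singleton]
      have := Finset.card_sdiff_of_subset hsub
      omega
    obtain ⟨a, ha⟩ : (u \ {p, q}).Nonempty := Finset.card_pos.mp (by omega)
    obtain ⟨b, hb, hba⟩ := Finset.exists_mem_ne (s := u \ {p, q}) (by omega) a
    obtain ⟨hau, hap, haq⟩ : a ∈ u ∧ a ≠ p ∧ a ≠ q := by
      simpa [not_or] using ha
    obtain ⟨hbu, hbp, hbq⟩ : b ∈ u ∧ b ≠ p ∧ b ≠ q := by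
      simpa [not_or] using hb
    have mkclique : ∀ c ∈ u, c ≠ p → c ≠ q →
        G.IsNClique ω (u.erase c) ∧ p ∈ u.erase c ∧ q ∈ u.erase c := by
      intro c hcu hcp hcq
      refine ⟨⟨hu.subset (Finset.erase_subset _ _), ?_⟩,
        Finset.mem_erase.mpr ⟨hcp.symm, hp⟩, Finset.mem_erase.mpr ⟨hcq.symm, hq⟩⟩
      rw [Finset.card_erase_of_mem hcu, hucard]
      omega
    obtain ⟨w, -, hsu'⟩ := huniq hadj
    have hce : u.erase a = u.erase b :=
      (hsu' _ (mkclique a hau hap haq)).trans (hsu' _ (mkclique b hbu hbp hbq)).symm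
    have : a ∈ u.erase a := hce ▸ Finset.mem_erase.mpr ⟨hba.symm, hau⟩
    exact (Finset.notMem_erase a u) this
  have hle : G.cliqueNum ≤ ω := by
    obtain ⟨t, ht⟩ := G.exists_isNClique_cliqueNum
    rw [← ht.card_eq]
    exact hbound t ht.isClique
  have hge : ω ≤ G.cliqueNum := by
    rw [← hs.card_eq]
    exact hs.isClique.card_le_cliqueNum
  omega
end

section
/- If Γ is a k-regular, ω-clique regular graph on n vertices with m = nk/(ω(ω−1)) ω-cliques, then the characteristic polynomial of the ω-clique graph satisfies p(C_ω(Γ); λ) = (λ+ω)^{m−n} · p(Γ; λ + ω − k/(ω−1)). -/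
open SimpleGraph

/-- The `ω`-clique graph: vertices are the `ω`-cliques of `G`, two distinct cliques
adjacent iff they have nonempty intersection. -/
def cliqueGraph {V : Type*} [DecidableEq V] (G : SimpleGraph V) (ω : ℕ) :
    SimpleGraph {s : Finset V // G.IsNClique ω s} where
  Adj a b := a ≠ b ∧ (a.val ∩ b.val).Nonempty
  symm := ⟨fun a b h => ⟨h.1.symm, by rw [Finset.inter_comm]; exact h.2⟩⟩
  loopless := ⟨fun a h => h.1 rfl⟩

instance {V : Type*} [DecidableEq V] (G : SimpleGraph V) (ω : ℕ) :
    DecidableRel (cliqueGraph G ω).Adj :=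
  fun a b => inferInstanceAs (Decidable (a ≠ b ∧ (a.val ∩ b.val).Nonempty))

open Matrix Finset

/-! Let `N` be the vertex–clique incidence matrix of `Γ`. Two distinct `ω`-cliques share at most
one vertex (an edge lies in only one of them), so `Nᵀ N = A(C_ω(Γ)) + ω I`; every edge lies in
exactly one clique and every vertex in `k / (ω - 1)` of them, so `N Nᵀ = A(Γ) + k/(ω - 1) I`.
The theorem is then `λ^m p(N Nᵀ; λ) = λ^n p(Nᵀ N; λ)` evaluated at `λ + ω`. -/

theorem Matrix.eval_charpoly_add_smul_one {n R : Type*} [Fintype n] [DecidableEq n] [CommRing R]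
    (M : Matrix n n R) (c t : R) : (M + c • 1).charpoly.eval t = M.charpoly.eval (t - c) := by
  rw [eval_charpoly, eval_charpoly, scalar_apply, scalar_apply, smul_one_eq_diagonal,
    ← diagonal_sub, sub_add_eq_sub_sub_swap]

section

variable {V : Type*} {G : SimpleGraph V} {ω : ℕ}

namespace IsCliqueRegular

theorem two_le (hcr : IsCliqueRegular G ω) : 2 ≤ ω := by
  obtain ⟨⟨u, v⟩, huv⟩ := hcr.1
  obtain ⟨s, ⟨hs, hu, hv⟩, -⟩ := hcr.2 huv
  rw [← hs.card_eq]
  exact one_lt_card.2 ⟨u, hu, v, hv, G.ne_of_adj huv⟩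

variable [DecidableEq V]

theorem card_inter_le_one (hcr : IsCliqueRegular G ω) {s t : Finset V} (hs : G.IsNClique ω s)
    (ht : G.IsNClique ω t) (hst : s ≠ t) : #(s ∩ t) ≤ 1 := by
  refine card_le_one.2 fun u hu v hv => by_contra fun huv => hst ?_
  rw [mem_inter] at hu hv
  exact (hcr.2 (hs.isClique hu.1 hv.1 huv)).unique ⟨hs, hu.1, hv.1⟩ ⟨ht, hu.2, hv.2⟩

variable [Fintype V] [DecidableRel G.Adj]

theorem card_cliques_containing_of_adj (hcr : IsCliqueRegular G ω) {u v : V} (huv : G.Adj u v) :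
    #{s : {s : Finset V // G.IsNClique ω s} | u ∈ s.1 ∧ v ∈ s.1} = 1 := by
  obtain ⟨s, ⟨hs, hu, hv⟩, huniq⟩ := hcr.2 huv
  rw [card_eq_one]
  refine ⟨⟨s, hs⟩, eq_singleton_iff_unique_mem.2 ⟨by simp [hu, hv], ?_⟩⟩
  simp only [mem_filter, mem_univ, true_and]
  exact fun t ht => Subtype.ext (huniq t.1 ⟨t.2, ht⟩)

theorem card_cliques_containing_mul_eq_degree (hcr : IsCliqueRegular G ω) (v : V) :
    #{s : {s : Finset V // G.IsNClique ω s} | v ∈ s.1} * (ω - 1) = G.degree v := by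
  set S : Finset {s : Finset V // G.IsNClique ω s} := {s | v ∈ s.1}
  have hnbr : G.neighborFinset v = S.biUnion fun s => s.1.erase v := by
    ext w
    simp only [S, SimpleGraph.mem_neighborFinset, mem_biUnion, mem_filter, mem_univ, true_and,
      mem_erase]
    constructor
    · intro hvw
      obtain ⟨s, ⟨hs, hv, hw⟩, -⟩ := hcr.2 hvw
      exact ⟨⟨s, hs⟩, hv, (G.ne_of_adj hvw).symm, hw⟩
    · rintro ⟨s, hv, hwv, hw⟩
      exact s.2.isClique hv hw hwv.symm
  have hdisj : (S : Set _).PairwiseDisjoint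
      fun s : {s : Finset V // G.IsNClique ω s} => s.1.erase v := by
    intro s hs t ht hst
    simp only [S, mem_coe, mem_filter, mem_univ, true_and] at hs ht
    refine disjoint_left.2 fun w hws hwt => hst ?_
    rw [mem_erase] at hws hwt
    exact Subtype.ext ((hcr.2 (s.2.isClique hs hws.2 hws.1.symm)).unique
      ⟨s.2, hs, hws.2⟩ ⟨t.2, ht, hwt.2⟩)
  rw [← card_neighborFinset_eq_degree, hnbr, card_biUnion hdisj,
    sum_congr rfl fun s hs => by rw [card_erase_of_mem (mem_filter.1 hs).2, s.2.card_eq],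
    sum_const, smul_eq_mul]

end IsCliqueRegular

def cliqueIncidenceMatrix [DecidableEq V] (R : Type*) [Zero R] [One R] (G : SimpleGraph V)
    (ω : ℕ) : Matrix V {s : Finset V // G.IsNClique ω s} R :=
  Matrix.of fun v s => if v ∈ s.1 then 1 else 0

variable [Fintype V] [DecidableEq V] {R : Type*}

theorem cliqueIncidenceMatrix_transpose_mul_apply [NonAssocSemiring R]
    (s t : {s : Finset V // G.IsNClique ω s}) :
    ((cliqueIncidenceMatrix R G ω)ᵀ * cliqueIncidenceMatrix R G ω) s t = #(s.1 ∩ t.1) := by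
  simp only [cliqueIncidenceMatrix, mul_apply, transpose_apply, of_apply, ite_zero_mul_ite_zero,
    mul_one, sum_boole, filter_and, filter_univ_mem]

theorem cliqueIncidenceMatrix_mul_transpose_apply [NonAssocSemiring R] [DecidableRel G.Adj]
    (u v : V) :
    (cliqueIncidenceMatrix R G ω * (cliqueIncidenceMatrix R G ω)ᵀ) u v =
      #{s : {s : Finset V // G.IsNClique ω s} | u ∈ s.1 ∧ v ∈ s.1} := by
  simp only [cliqueIncidenceMatrix, mul_apply, transpose_apply, of_apply, ite_zero_mul_ite_zero,
    mul_one, sum_boole]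

namespace IsCliqueRegular

theorem cliqueIncidenceMatrix_transpose_mul [NonAssocSemiring R] (hcr : IsCliqueRegular G ω) :
    (cliqueIncidenceMatrix R G ω)ᵀ * cliqueIncidenceMatrix R G ω =
      (cliqueGraph G ω).adjMatrix R + (ω : R) • 1 := by
  ext s t
  rw [cliqueIncidenceMatrix_transpose_mul_apply, Matrix.add_apply, adjMatrix_apply,
    Matrix.smul_apply, one_apply]
  obtain rfl | hst := eq_or_ne s t
  · simp [cliqueGraph, s.2.card_eq]
  · have hst' : s.1 ≠ t.1 := Subtype.coe_injective.ne hst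
    rcases Nat.le_one_iff_eq_zero_or_eq_one.1 (hcr.card_inter_le_one s.2 t.2 hst') with h | h
    · simp [cliqueGraph, hst, card_eq_zero.1 h]
    · simp [cliqueGraph, hst, h, ← card_pos]

theorem cliqueIncidenceMatrix_mul_transpose [Field R] [CharZero R] [DecidableRel G.Adj] {k : ℕ}
    (hcr : IsCliqueRegular G ω) (hreg : G.IsRegularOfDegree k) :
    cliqueIncidenceMatrix R G ω * (cliqueIncidenceMatrix R G ω)ᵀ =
      G.adjMatrix R + ((k : R) / (ω - 1)) • 1 := by
  ext u v
  rw [cliqueIncidenceMatrix_mul_transpose_apply, Matrix.add_apply, adjMatrix_apply,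
    Matrix.smul_apply, one_apply]
  obtain rfl | huv := eq_or_ne u v
  · have hω : (ω : R) - 1 ≠ 0 := sub_ne_zero.2 (Nat.cast_ne_one.2 (by grind [hcr.two_le]))
    have hcount := congrArg (Nat.cast (R := R)) (hcr.card_cliques_containing_mul_eq_degree u)
    rw [hreg u, Nat.cast_mul, Nat.cast_sub (one_le_two.trans hcr.two_le), Nat.cast_one] at hcount
    simp [← hcount, hω]
  · by_cases hadj : G.Adj u v
    · simp [hadj, huv, hcr.card_cliques_containing_of_adj hadj]
    · have hnone : ∀ s : {s : Finset V // G.IsNClique ω s}, ¬(u ∈ s.1 ∧ v ∈ s.1) :=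
        fun s huvs => hadj (s.2.isClique huvs.1 huvs.2 huv)
      simp [hadj, huv, filter_false_of_mem fun s _ => hnone s]

end IsCliqueRegular

end

theorem stmt9_general {V : Type*} [Fintype V] [DecidableEq V] (G : SimpleGraph V)
    [DecidableRel G.Adj] (ω k n m : ℕ)
    (hn : n = Fintype.card V)
    (hm : m = Fintype.card {s : Finset V // G.IsNClique ω s})
    (hreg : G.IsRegularOfDegree k) (hcr : IsCliqueRegular G ω) :
    ∀ x : ℝ,
      (x + ω) ^ n * (((cliqueGraph G ω).adjMatrix ℝ).charpoly.eval x) =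
        (x + ω) ^ m *
          ((G.adjMatrix ℝ).charpoly.eval (x + ω - (k : ℝ) / ((ω : ℝ) - 1))) := by
  intro x
  have key := congrArg (Polynomial.eval (x + ω))
    (charpoly_mul_comm' (cliqueIncidenceMatrix ℝ G ω) (cliqueIncidenceMatrix ℝ G ω)ᵀ)
  rw [hcr.cliqueIncidenceMatrix_mul_transpose hreg, hcr.cliqueIncidenceMatrix_transpose_mul,
    Polynomial.eval_mul, Polynomial.eval_mul, Polynomial.eval_pow, Polynomial.eval_pow,
    Polynomial.eval_X, eval_charpoly_add_smul_one, eval_charpoly_add_smul_one,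
    add_sub_cancel_right, ← hn, ← hm] at key
  exact key.symm

/-- If `Γ` is `k`-regular and `ω`-clique regular with `n` vertices and
`m = nk/(ω(ω−1))` `ω`-cliques, then
`p(C_ω(Γ); λ) = (λ+ω)^{m−n} p(Γ; λ+ω−k/(ω−1))`, stated with both sides multiplied
by `(λ+ω)^n` to avoid a possibly negative exponent. -/
theorem stmt9 {V : Type*} [Fintype V] [DecidableEq V] (G : SimpleGraph V)
    [DecidableRel G.Adj] (ω k n m : ℕ)
    (hn : n = Fintype.card V)
    (hm : m = Fintype.card {s : Finset V // G.IsNClique ω s})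
    (hm' : m * (ω * (ω - 1)) = n * k)
    (hreg : G.IsRegularOfDegree k) (hcr : IsCliqueRegular G ω) :
    ∀ x : ℝ,
      (x + ω) ^ n * (((cliqueGraph G ω).adjMatrix ℝ).charpoly.eval x) =
        (x + ω) ^ m *
          ((G.adjMatrix ℝ).charpoly.eval (x + ω - (k : ℝ) / ((ω : ℝ) - 1))) :=
  stmt9_general G ω k n m hn hm hreg hcr
end

section
/- Suppose Γ is an ω-clique regular graph on n vertices that is an edge regular graph erg(n, Δ(Γ), ω−2) (regular of degree Δ(Γ), with every pair of adjacent vertices having exactly ω−2 common neighbors). Then every maximal clique of Γ has order ω, i.e., Γ is a regular clique assembly. -/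
open SimpleGraph

/-- If `Γ` is `ω`-clique regular and an `erg(n, Δ(Γ), ω−2)` (regular, with adjacent vertices
having exactly `ω−2` common neighbors), then every maximal clique of `Γ` has order `ω`. -/
theorem stmt13 {V : Type*} [Fintype V] [DecidableEq V] (G : SimpleGraph V)
    [DecidableRel G.Adj] (ω : ℕ) (hcr : IsCliqueRegular G ω)
    (hreg : G.IsRegularOfDegree G.maxDegree)
    (hcommon : ∀ x y : V, G.Adj x y →
      (G.neighborFinset x ∩ G.neighborFinset y).card = ω - 2) :
    ∀ s : Finset V, G.IsClique ↑s →
      (∀ t : Finset V, G.IsClique ↑t → s ⊆ t → s = t) → s.card = ω := by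
  intro s hs hmax
  obtain ⟨e, he⟩ := hcr.1
  obtain ⟨a, b, hab⟩ : ∃ a b, G.Adj a b := by
    induction e using Sym2.ind with
    | _ a b => exact ⟨a, b, G.mem_edgeSet.mp he⟩
  have hd : 0 < G.maxDegree := by
    have : 0 < G.degree a := (G.degree_pos_iff_exists_adj a).2 ⟨b, hab⟩
    exact lt_of_lt_of_le this (G.degree_le_maxDegree a)
  -- s has at least two elements
  have h2 : 1 < s.card := by
    by_contra h
    push_neg at h
    interval_cases hc : s.card
    · have hse : s = ∅ := Finset.card_eq_zero.mp hc
      have hcl : G.IsClique (↑({a, b} : Finset V)) := by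
        rw [Finset.coe_pair]
        exact isClique_pair.mpr fun _ => hab
      have := hmax {a, b} hcl (by simp [hse])
      have hbmem : b ∈ ({a, b} : Finset V) := by simp
      rw [← this, hse] at hbmem
      simp at hbmem
    · obtain ⟨x, hse⟩ := Finset.card_eq_one.mp hc
      have hdx : 0 < G.degree x := by rw [hreg x]; exact hd
      obtain ⟨y, hy⟩ := (G.degree_pos_iff_exists_adj x).1 hdx
      have hcl : G.IsClique (↑({x, y} : Finset V)) := by
        rw [Finset.coe_pair]
        exact isClique_pair.mpr fun _ => hy
      have heq := hmax {x, y} hcl (by simp [hse])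
      have : ({x} : Finset V).card = ({x, y} : Finset V).card := by rw [← hse, heq]
      rw [Finset.card_singleton, Finset.card_pair hy.ne] at this
      omega
  obtain ⟨x, hx, y, hy, hxy⟩ := Finset.one_lt_card.mp h2
  have hadj : G.Adj x y := hs (Finset.mem_coe.mpr hx) (Finset.mem_coe.mpr hy) hxy
  obtain ⟨c, ⟨hc, hxc, hyc⟩, -⟩ := hcr.2 hadj
  have hpair : ({x, y} : Finset V) ⊆ c := by
    intro z hz
    rcases Finset.mem_insert.mp hz with h | h
    · exact h ▸ hxc
    · exact (Finset.mem_singleton.mp h) ▸ hyc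
  have hsub : c \ {x, y} ⊆ G.neighborFinset x ∩ G.neighborFinset y := by
    intro z hz
    rw [Finset.mem_sdiff, Finset.mem_insert, Finset.mem_singleton] at hz
    push_neg at hz
    obtain ⟨hzc, hzx, hzy⟩ := hz
    rw [Finset.mem_inter, mem_neighborFinset, mem_neighborFinset]
    exact ⟨hc.1 (Finset.mem_coe.mpr hxc) (Finset.mem_coe.mpr hzc) (Ne.symm hzx),
      hc.1 (Finset.mem_coe.mpr hyc) (Finset.mem_coe.mpr hzc) (Ne.symm hzy)⟩
  have hcard : (c \ ({x, y} : Finset V)).card = ω - 2 := by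
    rw [Finset.card_sdiff_of_subset hpair, hc.2, Finset.card_pair hxy]
  have heq : c \ ({x, y} : Finset V) = G.neighborFinset x ∩ G.neighborFinset y :=
    Finset.eq_of_subset_of_card_le hsub (by rw [hcommon x y hadj, hcard])
  have hsc : s ⊆ c := by
    intro z hz
    by_cases hzx : z = x
    · exact hzx ▸ hxc
    by_cases hzy : z = y
    · exact hzy ▸ hyc
    have : z ∈ G.neighborFinset x ∩ G.neighborFinset y := by
      rw [Finset.mem_inter, mem_neighborFinset, mem_neighborFinset]
      exact ⟨(hs (Finset.mem_coe.mpr hz) (Finset.mem_coe.mpr hx) hzx).symm,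
        (hs (Finset.mem_coe.mpr hz) (Finset.mem_coe.mpr hy) hzy).symm⟩
    rw [← heq, Finset.mem_sdiff] at this
    exact this.1
  rw [hmax c hc.1 hsc]
  exact hc.2
end
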